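/- arXiv:2009.01673 — 3 statements merged into one kernel-verified Lean document; each statement's English description precedes it below -/
import Mathlib

section
/- If G A is idempotent and ker(G A) = ker(A), then G is a generalized inverse of A, i.e., A G A = A. -/
/-- If G A is idempotent and ker(G A) = ker(A), then A G A = A. -/
theorem stmt4 {n : ℕ} (A G : Matrix (Fin n) (Fin n) ℝ)
    (h1 : (G * A) * (G * A) = G * A)
    (h2 : LinearMap.ker (G * A).mulVecLin = LinearMap.ker A.mulVecLin) :
    A * G * A = A := by
  have key : ∀ v : Fin n → ℝ, (A * G * A).mulVec v = A.mulVec v := by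
    intro v
    have hk : (G * A).mulVec ((G * A).mulVec v - v) = 0 := by
      rw [Matrix.mulVec_sub, Matrix.mulVec_mulVec, h1, sub_self]
    have hmem : ((G * A).mulVec v - v) ∈ LinearMap.ker (G * A).mulVecLin := by
      simpa [Matrix.mulVecLin_apply] using hk
    rw [h2, LinearMap.mem_ker, Matrix.mulVecLin_apply, Matrix.mulVec_sub,
      sub_eq_zero] at hmem
    calc (A * G * A).mulVec v = A.mulVec ((G * A).mulVec v) := by
          rw [Matrix.mulVec_mulVec, mul_assoc]
      _ = A.mulVec v := hmem
  ext i j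
  have := congrFun (key (Pi.single j 1)) i
  simpa [Matrix.mulVec_single] using this
end

section
/- If there exists an invertible matrix X such that A G = X · diag(I_r, 0) · X⁻¹ with r = rank(A), then G is a generalized inverse of A, i.e., A G A = A. -/
/-!
`A * G` is similar to the idempotent `diag(I_r, 0)`, so it is itself idempotent and has rank
`r = rank A`. Its column space lies in that of `A` and has the same dimension, so the two coincide;
an idempotent acts as the identity on its column space, whence `A * G * A = A`.
-/

/-- The n×n block diagonal matrix diag(I_r, 0). -/
def diagIr (n r : ℕ) : Matrix (Fin n) (Fin n) ℝ :=
  Matrix.of fun i j => if i = j ∧ (i : ℕ) < r then (1 : ℝ) else 0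

lemma diagIr_eq_diagonal (n r : ℕ) :
    diagIr n r = Matrix.diagonal fun i : Fin n => if (i : ℕ) < r then 1 else 0 := by
  ext i j
  by_cases hij : i = j <;> simp [diagIr, Matrix.diagonal, hij]

lemma isIdempotentElem_diagIr (n r : ℕ) : IsIdempotentElem (diagIr n r) := by
  rw [IsIdempotentElem, diagIr_eq_diagonal, Matrix.diagonal_mul_diagonal]
  congr 1
  ext i
  split_ifs <;> simp

lemma rank_diagIr {n r : ℕ} (hr : r ≤ n) : (diagIr n r).rank = r := by
  rw [diagIr_eq_diagonal, Matrix.rank_diagonal]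
  simpa using Fintype.card_fin_lt_of_le hr

namespace Matrix

section Conj

variable {n R : Type*} [Fintype n] [DecidableEq n] [CommRing R] {X : Matrix n n R}

lemma isIdempotentElem_conj (hX : IsUnit X) {D : Matrix n n R} (hD : IsIdempotentElem D) :
    IsIdempotentElem (X * D * X⁻¹) := by
  have hdet := (isUnit_iff_isUnit_det X).mp hX
  calc X * D * X⁻¹ * (X * D * X⁻¹) = X * (D * (X⁻¹ * (X * (D * X⁻¹)))) := by
        simp only [Matrix.mul_assoc]
    _ = X * (D * D) * X⁻¹ := by
        rw [nonsing_inv_mul_cancel_left _ _ hdet]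
        simp only [Matrix.mul_assoc]
    _ = X * D * X⁻¹ := by rw [hD.eq]

lemma rank_conj (hX : IsUnit X) (D : Matrix n n R) : (X * D * X⁻¹).rank = D.rank := by
  have hdet := (isUnit_iff_isUnit_det X).mp hX
  have hdet_inv : IsUnit X⁻¹.det := by
    simpa only [det_nonsing_inv] using hdet.ringInverse
  rw [rank_mul_eq_left_of_isUnit_det _ _ hdet_inv, rank_mul_eq_right_of_isUnit_det _ _ hdet]

end Conj

variable {l m n K : Type*} [Fintype l] [Fintype n] [Field K]

lemma range_mulVecLin_mul_eq_of_rank_eq {A : Matrix m n K} {B : Matrix n l K}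
    (h : (A * B).rank = A.rank) :
    LinearMap.range (A * B).mulVecLin = LinearMap.range A.mulVecLin := by
  refine Submodule.eq_of_le_of_finrank_le ?_ h.ge
  rw [mulVecLin_mul]
  exact LinearMap.range_comp_le_range _ _

lemma mul_mul_eq_self_of_isIdempotentElem_of_rank_eq [Fintype m] {A : Matrix m n K} {G : Matrix n m K}
    (hAG : IsIdempotentElem (A * G)) (h : (A * G).rank = A.rank) : A * G * A = A := by
  classical
  have hlin : IsIdempotentElem (A * G).mulVecLin := hAG.map toLinAlgEquiv'
  apply toLin'.injective
  rw [toLin'_apply', toLin'_apply', mulVecLin_mul,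
    LinearMap.IsIdempotentElem.comp_eq_right_iff hlin, range_mulVecLin_mul_eq_of_rank_eq h]

end Matrix

/-- If A G = X diag(I_r, 0) X⁻¹ for invertible X with r = rank(A),
then G is a generalized inverse of A. -/
theorem stmt9 {n : ℕ} (A G X : Matrix (Fin n) (Fin n) ℝ) (hX : IsUnit X)
    (h : A * G = X * diagIr n A.rank * X⁻¹) : A * G * A = A := by
  have hr : A.rank ≤ n := A.rank_le_card_width.trans_eq (Fintype.card_fin n)
  refine Matrix.mul_mul_eq_self_of_isIdempotentElem_of_rank_eq ?_ ?_
  · rw [h]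
    exact Matrix.isIdempotentElem_conj hX (isIdempotentElem_diagIr n _)
  · rw [h, Matrix.rank_conj hX, rank_diagIr hr]
end

section
/- Let A, G be n×n real matrices with range(A) ∩ ker(A) = {0} and range(G) = range(A). Let b ∈ range(A) and x₀ ∈ range(A), and define the iterative refinement xⱼ = (I − G A) x_{j−1} + G b. Then there exists an LS solution x* ∈ range(A) with A x* = b, each xⱼ ∈ range(A), and ‖xⱼ − x*‖ ≤ ‖Qᵀ (I − G A)ʲ Q‖ · ‖x₀ − x*‖, where the columns of Q form an orthonormal basis of range(A). In particular, xⱼ → x* for all such b and x₀ if and only if Qᵀ(I − G A)ʲ Q → 0 as j → ∞. -/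
/-!
The solution set of `A x = b` meets range(A) in exactly one point `x*`, because `A` is
injective, hence bijective, on range(A). Since `G b = G A x*`, the point `x*` is a fixed point
of the iteration, so `xⱼ - x* = (I - G A)ʲ (x₀ - x*)`. Both errors lie in range(A), the image
of the isometry `Q : ℝʳ → ℝⁿ`, and in these coordinates `(I - G A)ʲ` acts as `Qᵀ (I - G A)ʲ Q`.
This gives the bound and, with it, convergence when `Qᵀ (I - G A)ʲ Q → 0`. Conversely, the
iteration with `b = 0` and `x₀` the `k`-th column of `Q` converges to the unique
solution `0`, so the `k`-th column of `Qᵀ (I - G A)ʲ Q` tends to `0`.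
-/

open scoped Matrix

open scoped Matrix.Norms.L2Operator

/-- The Euclidean (2-) norm of a vector in ℝⁿ. -/
noncomputable def enorm' {n : ℕ} (v : Fin n → ℝ) : ℝ := Real.sqrt (∑ i, v i ^ 2)

open Filter Topology

theorem LinearMap.exists_mem_range_apply_eq {K V : Type*} [Field K] [AddCommGroup V] [Module K V]
    [FiniteDimensional K V] (f : V →ₗ[K] V) (hf : Disjoint (range f) (ker f)) {b : V}
    (hb : b ∈ range f) : ∃ x ∈ range f, f x = b := by
  have hinj : Function.Injective (f.restrict fun x (_ : x ∈ range f) => mem_range_self f x) :=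
    (injective_restrict_iff _).2 hf
  obtain ⟨⟨x, hx⟩, hfx⟩ := LinearMap.injective_iff_surjective.1 hinj ⟨b, hb⟩
  exact ⟨x, hx, congrArg Subtype.val hfx⟩

theorem Matrix.sub_eq_pow_mulVec_of_recurrence {ι R : Type*} [Fintype ι] [DecidableEq ι] [Ring R]
    {T : Matrix ι ι R} {c xs : ι → R} {x : ℕ → ι → R} (hxs : T *ᵥ xs + c = xs)
    (hx : ∀ j, x (j + 1) = T *ᵥ x j + c) (j : ℕ) : x j - xs = (T ^ j) *ᵥ (x 0 - xs) := by
  induction j with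
  | zero => rw [pow_zero, Matrix.one_mulVec]
  | succ j ih =>
    calc x (j + 1) - xs = T *ᵥ (x j - xs) := by
          rw [hx j, Matrix.mulVec_sub]; nth_rw 1 [← hxs]; abel
      _ = (T ^ (j + 1)) *ᵥ (x 0 - xs) := by rw [ih, Matrix.mulVec_mulVec, ← pow_succ']

theorem Matrix.tendsto_zero_of_tendsto_mulVec_single {α m n R : Type*} [Fintype n]
    [DecidableEq n] [Ring R] [TopologicalSpace R] {l : Filter α} {M : α → Matrix m n R}
    (h : ∀ k, Tendsto (fun a => M a *ᵥ Pi.single k 1) l (𝓝 0)) : Tendsto M l (𝓝 0) :=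
  tendsto_pi_nhds.2 fun i => tendsto_pi_nhds.2 fun k => by
    simpa [Matrix.mulVec_single_one] using tendsto_pi_nhds.1 (h k) i

theorem enorm'_eq_norm_toLp {n : ℕ} (v : Fin n → ℝ) : enorm' v = ‖WithLp.toLp 2 v‖ := by
  simp [enorm', EuclideanSpace.norm_eq]

theorem enorm'_mulVec_le {m n : ℕ} (M : Matrix (Fin m) (Fin n) ℝ) (v : Fin n → ℝ) :
    enorm' (M *ᵥ v) ≤ ‖M‖ * enorm' v := by
  simpa [enorm'_eq_norm_toLp] using M.l2_opNorm_mulVec (WithLp.toLp 2 v)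

theorem enorm'_mulVec_of_transpose_mul_self {n r : ℕ} {Q : Matrix (Fin n) (Fin r) ℝ}
    (hQ : Qᵀ * Q = 1) (w : Fin r → ℝ) : enorm' (Q *ᵥ w) = enorm' w := by
  have hdot : (Q *ᵥ w) ⬝ᵥ (Q *ᵥ w) = w ⬝ᵥ w := by
    rw [Matrix.dotProduct_mulVec, ← Matrix.mulVec_transpose, Matrix.mulVec_mulVec, hQ,
      Matrix.one_mulVec]
  simpa [enorm', dotProduct, sq] using congrArg Real.sqrt hdot

theorem tendsto_of_enorm'_sub_le {α : Type*} {n : ℕ} {l : Filter α} {x : α → Fin n → ℝ}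
    {a : Fin n → ℝ} {u : α → ℝ} (hu : Tendsto u l (𝓝 0)) (h : ∀ j, enorm' (x j - a) ≤ u j) :
    Tendsto x l (𝓝 a) := by
  have hLp : Tendsto (fun j => WithLp.toLp 2 (x j - a)) l (𝓝 0) :=
    squeeze_zero_norm (fun j => (enorm'_eq_norm_toLp _).symm.trans_le (h j)) hu
  simpa using ((PiLp.continuous_ofLp 2 _).tendsto 0).comp hLp |>.add_const a

/- In the orthonormal coordinates `w ↦ Q *ᵥ w` of range Q, the restriction of `T` to range Q
is represented by `Qᵀ * T * Q`. -/
theorem enorm'_mulVec_le_of_mem_range {n r : ℕ} {Q : Matrix (Fin n) (Fin r) ℝ}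
    (hQ : Qᵀ * Q = 1) (T : Matrix (Fin n) (Fin n) ℝ) {d : Fin n → ℝ}
    (hd : d ∈ LinearMap.range Q.mulVecLin) (hTd : T *ᵥ d ∈ LinearMap.range Q.mulVecLin) :
    enorm' (T *ᵥ d) ≤ ‖Qᵀ * T * Q‖ * enorm' d := by
  obtain ⟨w, rfl⟩ := hd
  obtain ⟨u, hu⟩ := hTd
  simp only [Matrix.mulVecLin_apply] at hu ⊢
  have hcoord : u = (Qᵀ * T * Q) *ᵥ w := by
    rw [← Matrix.one_mulVec u, ← hQ, ← Matrix.mulVec_mulVec, hu, Matrix.mulVec_mulVec,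
      Matrix.mulVec_mulVec]
  rw [← hu, enorm'_mulVec_of_transpose_mul_self hQ, enorm'_mulVec_of_transpose_mul_self hQ,
    hcoord]
  exact enorm'_mulVec_le _ _

section IterativeRefinement

variable {n r : ℕ} {A G : Matrix (Fin n) (Fin n) ℝ} {Q : Matrix (Fin n) (Fin r) ℝ}

theorem mem_range_of_refinement
    (hrange : LinearMap.range G.mulVecLin = LinearMap.range A.mulVecLin)
    {b : Fin n → ℝ} {x : ℕ → Fin n → ℝ} (h0 : x 0 ∈ LinearMap.range A.mulVecLin)
    (hx : ∀ j : ℕ, x (j + 1) = (1 - G * A) *ᵥ x j + G *ᵥ b) (j : ℕ) :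
    x j ∈ LinearMap.range A.mulVecLin := by
  have hG : ∀ v, G *ᵥ v ∈ LinearMap.range A.mulVecLin := fun v =>
    hrange ▸ LinearMap.mem_range_self G.mulVecLin v
  induction j with
  | zero => exact h0
  | succ j ih =>
    rw [hx j, Matrix.sub_mulVec, Matrix.one_mulVec, ← Matrix.mulVec_mulVec]
    exact add_mem (sub_mem ih (hG _)) (hG b)

theorem exists_solution_and_enorm'_refinement_sub_le
    (hinter : LinearMap.range A.mulVecLin ⊓ LinearMap.ker A.mulVecLin = ⊥)
    (hrange : LinearMap.range G.mulVecLin = LinearMap.range A.mulVecLin)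
    (hQortho : Qᵀ * Q = 1)
    (hQrange : LinearMap.range Q.mulVecLin = LinearMap.range A.mulVecLin)
    {b : Fin n → ℝ} (hb : b ∈ LinearMap.range A.mulVecLin) {x : ℕ → Fin n → ℝ}
    (h0 : x 0 ∈ LinearMap.range A.mulVecLin)
    (hx : ∀ j : ℕ, x (j + 1) = (1 - G * A) *ᵥ x j + G *ᵥ b) :
    ∃ xs ∈ LinearMap.range A.mulVecLin, A *ᵥ xs = b ∧
      (∀ j : ℕ, x j ∈ LinearMap.range A.mulVecLin) ∧
      ∀ j : ℕ, enorm' (x j - xs) ≤ ‖Qᵀ * (1 - G * A) ^ j * Q‖ * enorm' (x 0 - xs) := by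
  obtain ⟨xs, hxs, rfl⟩ := A.mulVecLin.exists_mem_range_apply_eq (disjoint_iff.2 hinter) hb
  have hmem := mem_range_of_refinement hrange h0 hx
  have hfixed : (1 - G * A) *ᵥ xs + G *ᵥ (A *ᵥ xs) = xs := by
    rw [Matrix.sub_mulVec, Matrix.one_mulVec, Matrix.mulVec_mulVec, sub_add_cancel]
  refine ⟨xs, hxs, rfl, hmem, fun j => ?_⟩
  have herr := Matrix.sub_eq_pow_mulVec_of_recurrence hfixed hx j
  rw [herr]
  refine enorm'_mulVec_le_of_mem_range hQortho _ ?_ ?_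
  · exact hQrange ▸ sub_mem h0 hxs
  · exact herr ▸ hQrange ▸ sub_mem (hmem j) hxs

theorem tendsto_conj_pow_of_forall_tendsto_refinement
    (hinter : LinearMap.range A.mulVecLin ⊓ LinearMap.ker A.mulVecLin = ⊥)
    (hQrange : LinearMap.range Q.mulVecLin = LinearMap.range A.mulVecLin)
    (hconv : ∀ b ∈ LinearMap.range A.mulVecLin, ∀ x₀ ∈ LinearMap.range A.mulVecLin,
      ∀ x : ℕ → Fin n → ℝ, x 0 = x₀ →
        (∀ j : ℕ, x (j + 1) = (1 - G * A) *ᵥ x j + G *ᵥ b) →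
        ∃ xs ∈ LinearMap.range A.mulVecLin, A *ᵥ xs = b ∧ Tendsto x atTop (𝓝 xs)) :
    Tendsto (fun j : ℕ => Qᵀ * (1 - G * A) ^ j * Q) atTop (𝓝 0) := by
  refine Matrix.tendsto_zero_of_tendsto_mulVec_single fun k => ?_
  have hv : Q *ᵥ Pi.single k 1 ∈ LinearMap.range A.mulVecLin :=
    hQrange ▸ LinearMap.mem_range_self Q.mulVecLin _
  obtain ⟨xs, hxs, hAxs, hlim⟩ := hconv 0 (zero_mem _) _ hv
    (fun j => (1 - G * A) ^ j *ᵥ Q *ᵥ Pi.single k 1) (by simp)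
    (fun j => by simp [pow_succ', Matrix.mulVec_mulVec])
  obtain rfl : xs = 0 := Submodule.disjoint_def.1 (disjoint_iff.2 hinter) xs hxs hAxs
  have hQT : Continuous fun v : Fin n → ℝ => Qᵀ *ᵥ v :=
    continuous_const.matrix_mulVec continuous_id
  simpa only [Matrix.mulVec_mulVec, Matrix.mulVec_zero, Function.comp_def, Matrix.mul_assoc] using
    (hQT.tendsto 0).comp hlim

end IterativeRefinement

/-- Convergence of iterative refinement: if range(A) ∩ ker(A) = {0} and range(G) = range(A),
and Q has orthonormal columns spanning range(A), then for every b, x₀ ∈ range(A) the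
iteration xⱼ = (I − G A)x_{j−1} + G b stays in range(A), admits an LS solution x* ∈ range(A)
with A x* = b and ‖xⱼ − x*‖ ≤ ‖Qᵀ(I − G A)ʲ Q‖ ‖x₀ − x*‖; moreover convergence for all such
b, x₀ holds if and only if Qᵀ(I − G A)ʲ Q → 0. -/
theorem stmt18 {n r : ℕ} (A G : Matrix (Fin n) (Fin n) ℝ) (Q : Matrix (Fin n) (Fin r) ℝ)
    (hinter : LinearMap.range A.mulVecLin ⊓ LinearMap.ker A.mulVecLin = ⊥)
    (hrange : LinearMap.range G.mulVecLin = LinearMap.range A.mulVecLin)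
    (hQortho : Qᵀ * Q = 1)
    (hQrange : LinearMap.range Q.mulVecLin = LinearMap.range A.mulVecLin) :
    (∀ b ∈ LinearMap.range A.mulVecLin, ∀ x₀ ∈ LinearMap.range A.mulVecLin,
      ∀ x : ℕ → Fin n → ℝ, x 0 = x₀ →
        (∀ j : ℕ, x (j + 1) = (1 - G * A).mulVec (x j) + G.mulVec b) →
        ∃ xs ∈ LinearMap.range A.mulVecLin, A.mulVec xs = b ∧
          (∀ j : ℕ, x j ∈ LinearMap.range A.mulVecLin) ∧
          ∀ j : ℕ, enorm' (x j - xs) ≤ ‖Qᵀ * (1 - G * A) ^ j * Q‖ * enorm' (x₀ - xs)) ∧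
    ((∀ b ∈ LinearMap.range A.mulVecLin, ∀ x₀ ∈ LinearMap.range A.mulVecLin,
      ∀ x : ℕ → Fin n → ℝ, x 0 = x₀ →
        (∀ j : ℕ, x (j + 1) = (1 - G * A).mulVec (x j) + G.mulVec b) →
        ∃ xs ∈ LinearMap.range A.mulVecLin, A.mulVec xs = b ∧
          Filter.Tendsto x Filter.atTop (nhds xs)) ↔
      Filter.Tendsto (fun j : ℕ => Qᵀ * (1 - G * A) ^ j * Q) Filter.atTop (nhds 0)) := by
  refine ⟨fun b hb x₀ hx₀ x h0 hx => ?_,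
    tendsto_conj_pow_of_forall_tendsto_refinement hinter hQrange,
    fun hconj b hb x₀ hx₀ x h0 hx => ?_⟩
  · subst h0
    exact exists_solution_and_enorm'_refinement_sub_le hinter hrange hQortho hQrange hb hx₀ hx
  · subst h0
    obtain ⟨xs, hxs, hAxs, -, hle⟩ :=
      exists_solution_and_enorm'_refinement_sub_le hinter hrange hQortho hQrange hb hx₀ hx
    refine ⟨xs, hxs, hAxs, tendsto_of_enorm'_sub_le ?_ hle⟩
    simpa using hconj.norm.mul_const (enorm' (x 0 - xs))
end
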